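/- arXiv:1405.1229 — 2 statements merged into one kernel-verified Lean document; each statement's English description precedes it below -/
import Mathlib

section
/- Projection step of the equivalence of semantics: let M' be a well-formed modular system in MS(σ',ε') such that (M')^mt = (M')^op, and let ν ⊆ σ'∪ε'. Then the projection π_ν(M') ∈ MS(σ'∩ν, ε'∩ν) satisfies (π_ν(M'))^mt = (π_ν(M'))^op. -/
universe u

/-- Well-formed modular systems over a universal vocabulary `τ` consisting of all
symbols of type `Symb`, with interpretations in `Val`; `MS Symb Val σ ε` is the type
of well-formed modular systems with input (instance) vocabulary `σ` and output
(expansion) vocabulary `ε`, built from primitive modules by projection, sequential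
composition, union and feedback. -/
inductive MS (Symb Val : Type u) : Set Symb → Set Symb → Type u
  | prim (σ ε : Set Symb) (hdisj : Disjoint σ ε)
      (S : Set (Symb → Val))
      (hS : ∀ B B' : Symb → Val, Set.EqOn B B' (σ ∪ ε) → (B ∈ S ↔ B' ∈ S)) :
      MS Symb Val σ ε
  | proj {σ ε : Set Symb} (ν : Set Symb) (hν : ν ⊆ σ ∪ ε)
      (M : MS Symb Val σ ε) : MS Symb Val (σ ∩ ν) (ε ∩ ν)
  | comp {σ1 ε1 σ2 ε2 : Set Symb}
      (hcomposable : Disjoint ε1 ε2) (hindep : Disjoint σ1 ε2)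
      (M1 : MS Symb Val σ1 ε1) (M2 : MS Symb Val σ2 ε2) :
      MS Symb Val (σ1 ∪ (σ2 \ ε1)) (ε1 ∪ ε2)
  | union {σ1 ε1 σ2 ε2 : Set Symb}
      (h12 : Disjoint σ1 ε2) (h21 : Disjoint σ2 ε1)
      (M1 : MS Symb Val σ1 ε1) (M2 : MS Symb Val σ2 ε2) :
      MS Symb Val (σ1 ∪ σ2) (ε1 ∪ ε2)
  | feedback {σ ε : Set Symb} (R S : Symb) (hR : R ∈ σ) (hS : S ∈ ε)
      (M : MS Symb Val σ ε) : MS Symb Val (σ \ {R}) (ε ∪ {R})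

variable {Symb Val : Type u}

/-- Model-theoretic semantics `M^mt`: the set of `(σ ∪ ε)`-structures that are models
of `M`.  Structures are represented as total functions `Symb → Val`, and a set of
`(σ ∪ ε)`-structures is represented by the set of all total functions whose
restriction to `σ ∪ ε` is one of those structures. -/
def MS.mt : ∀ {σ ε : Set Symb}, MS Symb Val σ ε → Set (Symb → Val)
  | _, _, .prim σ ε _ S _ => {B | ∃ B' ∈ S, Set.EqOn B B' (σ ∪ ε)}
  | _, _, .proj ν _ M => {B | ∃ B' ∈ M.mt, Set.EqOn B' B ν}
  | _, _, .comp _ _ M1 M2 => M1.mt ∩ M2.mt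
  | _, _, .union _ _ M1 M2 => M1.mt ∪ M2.mt
  | _, _, .feedback R S _ _ M => {B | B ∈ M.mt ∧ B R = B S}

/-- The transition relation `(M, B1) ⟶ B2` of the structural operational semantics,
on `τ`-states (total functions `Symb → Val`). -/
def MS.trans : ∀ {σ ε : Set Symb}, MS Symb Val σ ε → (Symb → Val) → (Symb → Val) → Prop
  | _, _, .prim σ ε _ S _, B1, B2 =>
      (∃ B' ∈ S, Set.EqOn B2 B' (σ ∪ ε)) ∧ Set.EqOn B2 B1 εᶜ
  | _, _, @MS.proj _ _ _ ε' ν _ M, B1, B2 =>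
      ∃ B1' B2' : Symb → Val, Set.EqOn B1' B1 ν ∧ Set.EqOn B2' B2 ν ∧
        M.trans B1' B2' ∧ Set.EqOn B2 B1 (ε' ∩ ν)ᶜ
  | _, _, .comp _ _ M1 M2, B1, B2 => ∃ B', M1.trans B1 B' ∧ M2.trans B' B2
  | _, _, .union _ _ M1 M2, B1, B2 => M1.trans B1 B2 ∨ M2.trans B1 B2
  | _, _, .feedback R S _ _ M, B1, B2 => M.trans B1 B2 ∧ B1 R = B2 S

/-- Operational semantics `M^op`: the set of `(σ ∪ ε)`-structures `B` for which there
are `τ`-states `B1`, `B2` with `(M, B1) ⟶ B2`, `B|_σ = B1|_σ` and `B|_ε = B2|_ε`. -/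
def MS.op {σ ε : Set Symb} (M : MS Symb Val σ ε) : Set (Symb → Val) :=
  {B | ∃ B1 B2 : Symb → Val, M.trans B1 B2 ∧ Set.EqOn B B1 σ ∧ Set.EqOn B B2 ε}

/-- Every well-formed modular system has disjoint input and output vocabularies. -/
lemma MS.disj : ∀ {σ ε : Set Symb}, MS Symb Val σ ε → Disjoint σ ε := by
  intro σ ε M
  induction M with
  | prim _ _ hd _ _ => exact hd
  | proj ν hν M ih =>
      exact Set.disjoint_left.mpr fun x hx hx' =>
        Set.disjoint_left.mp ih hx.1 hx'.1
  | comp hc hi M1 M2 ih1 ih2 =>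
      rw [Set.disjoint_left] at *
      rintro x (hx | hx) (hx' | hx')
      · exact ih1 hx hx'
      · exact hi hx hx'
      · exact hx.2 hx'
      · exact ih2 hx.1 hx'
  | union h12 h21 M1 M2 ih1 ih2 =>
      rw [Set.disjoint_left] at *
      rintro x (hx | hx) (hx' | hx')
      · exact ih1 hx hx'
      · exact h12 hx hx'
      · exact h21 hx hx'
      · exact ih2 hx hx'
  | feedback R S hR hS M ih =>
      rw [Set.disjoint_left] at *
      rintro x hx (hx' | hx')
      · exact ih hx.1 hx'
      · exact hx.2 hx'

/-- Frame property: a transition only changes symbols in the output vocabulary. -/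
lemma MS.trans_frame : ∀ {σ ε : Set Symb} (M : MS Symb Val σ ε) {B1 B2 : Symb → Val},
    M.trans B1 B2 → Set.EqOn B2 B1 εᶜ := by
  intro σ ε M
  induction M with
  | prim σ ε hd S hS => exact fun h => h.2
  | proj ν hν M ih =>
      rintro B1 B2 ⟨_, _, _, _, _, h4⟩
      exact h4
  | comp hc hi M1 M2 ih1 ih2 =>
      rintro B1 B2 ⟨B', h1, h2⟩ x hx
      have hx1 : x ∉ (_ : Set Symb) := fun h' => hx (Or.inl h')
      have hx2 : x ∉ (_ : Set Symb) := fun h' => hx (Or.inr h')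
      exact (ih2 h2 hx2).trans (ih1 h1 hx1)
  | union h12 h21 M1 M2 ih1 ih2 =>
      rintro B1 B2 (h | h) x hx
      · exact ih1 h fun h' => hx (Or.inl h')
      · exact ih2 h fun h' => hx (Or.inr h')
  | feedback R S hR hS M ih =>
      rintro B1 B2 ⟨h1, _⟩ x hx
      exact ih h1 fun h' => hx (Or.inl h')

/-- Projection step of the equivalence of semantics: if `M'` is a
well-formed modular system in `MS(σ', ε')` with `(M')^mt = (M')^op` and
`ν ⊆ σ' ∪ ε'`, then the projection `π_ν(M') ∈ MS(σ' ∩ ν, ε' ∩ ν)` satisfies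
`(π_ν(M'))^mt = (π_ν(M'))^op`. -/
theorem mt_eq_op_proj {σ' ε' : Set Symb} (M' : MS Symb Val σ' ε')
    (ν : Set Symb) (hν : ν ⊆ σ' ∪ ε') (h : M'.mt = M'.op) :
    (MS.proj ν hν M').mt = (MS.proj ν hν M').op := by
  classical
  have hdisj := M'.disj
  ext B
  constructor
  · rintro ⟨B', hB'mt, hBν⟩
    rw [h] at hB'mt
    obtain ⟨C1, C2, htr, hσ, hε⟩ := hB'mt
    have hframe := MS.trans_frame M' htr
    refine ⟨C1, fun x => if x ∈ ν then C2 x else C1 x,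
      ⟨C1, C2, fun _ _ => rfl, ?_, htr, ?_⟩, ?_, ?_⟩
    · intro x hx; simp [hx]
    · intro x hx
      by_cases hxν : x ∈ ν
      · have hxε : x ∉ ε' := fun h' => hx ⟨h', hxν⟩
        simp only [hxν, if_true]
        exact hframe hxε
      · simp [hxν]
    · rintro x ⟨hxσ, hxν⟩
      exact (hBν hxν).symm.trans (hσ hxσ)
    · rintro x ⟨hxε, hxν⟩
      simp only [hxν, if_true]
      exact (hBν hxν).symm.trans (hε hxε)
  · rintro ⟨B1, B2, ⟨B1', B2', h1, h2, htr, _⟩, hBσ, hBε⟩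
    refine ⟨fun x => if x ∈ ε' then B2' x else B1' x, ?_, ?_⟩
    · rw [h]
      refine ⟨B1', B2', htr, ?_, ?_⟩
      · intro x hx
        have : x ∉ ε' := Set.disjoint_left.mp hdisj hx
        simp [this]
      · intro x hx; simp [hx]
    · intro x hxν
      by_cases hxε : x ∈ ε'
      · simp only [hxε, if_true]
        exact (h2 hxν).trans (hBε ⟨hxε, hxν⟩).symm
      · have hxσ : x ∈ σ' := (hν hxν).resolve_right hxε
        simp only [hxε, if_false]
        exact (h1 hxν).trans (hBσ ⟨hxσ, hxν⟩).symm
end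

section
/- Union step of the equivalence of semantics: let M1 ∈ MS(σ1,ε1) and M2 ∈ MS(σ2,ε2) be well-formed modular systems with σ1∩ε2 = ∅ and σ2∩ε1 = ∅, such that M1^mt = M1^op and M2^mt = M2^op. Then the union M1 ∪ M2 ∈ MS(σ1∪σ2, ε1∪ε2) satisfies (M1 ∪ M2)^mt = (M1 ∪ M2)^op. -/
universe u

variable {Symb Val : Type u}

theorem MS.inertia {σ ε : Set Symb} (M : MS Symb Val σ ε) :
    ∀ {B1 B2 : Symb → Val}, M.trans B1 B2 → Set.EqOn B2 B1 εᶜ := by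
  induction M with
  | prim σ ε hd S hS =>
      intro B1 B2 h
      exact h.2
  | proj ν hν M ih =>
      intro B1 B2 h
      obtain ⟨B1', B2', _, _, _, h4⟩ := h
      exact h4
  | comp hc hi M1 M2 ih1 ih2 =>
      intro B1 B2 h
      obtain ⟨B', hA, hB⟩ := h
      intro s hs
      simp only [Set.mem_compl_iff, Set.mem_union, not_or] at hs
      rw [ih2 hB hs.2, ih1 hA hs.1]
  | union h12 h21 M1 M2 ih1 ih2 =>
      intro B1 B2 h
      intro s hs
      simp only [Set.mem_compl_iff, Set.mem_union, not_or] at hs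
      rcases h with h | h
      · exact ih1 h hs.1
      · exact ih2 h hs.2
  | feedback R S hR hS M ih =>
      intro B1 B2 h
      intro s hs
      simp only [Set.mem_compl_iff, Set.mem_union, not_or] at hs
      exact ih h.1 hs.1

theorem MS.localT {σ ε : Set Symb} (M : MS Symb Val σ ε) :
    ∀ {B1 B2 C1 : Symb → Val}, M.trans B1 B2 → Set.EqOn C1 B1 (σ ∪ ε) →
    ∃ C2, M.trans C1 C2 ∧ Set.EqOn C2 B2 (σ ∪ ε) ∧ Set.EqOn C2 C1 εᶜ := by
  classical
  induction M with
  | prim σ ε hd S hS =>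
      intro B1 B2 C1 h hC
      obtain ⟨⟨B', hB'S, hB'⟩, hin⟩ := h
      refine ⟨fun s => if s ∈ ε then B2 s else C1 s, ⟨⟨B', hB'S, ?_⟩, ?_⟩, ?_, ?_⟩
      · intro s hs
        by_cases hse : s ∈ ε
        · simp only [hse, if_pos]
          exact hB' hs
        · simp only [hse, if_neg, if_false]
          rw [hC hs, ← hin hse]
          exact hB' hs
      · intro s hs
        simp only [Set.mem_compl_iff] at hs
        simp [hs]
      · intro s hs
        by_cases hse : s ∈ ε
        · simp [hse]
        · simp only [hse, if_false]
          rw [hC hs, ← hin hse]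
      · intro s hs
        simp only [Set.mem_compl_iff] at hs
        simp [hs]
  | proj ν hν M ih =>
      rename_i σ' ε'
      intro B1 B2 C1 h hC
      obtain ⟨B1', B2', h1, h2, hM, hin⟩ := h
      have hνsub : ∀ s ∈ ν, s ∈ σ' ∩ ν ∪ ε' ∩ ν := by
        intro s hs
        rcases hν hs with h | h
        · exact Or.inl ⟨h, hs⟩
        · exact Or.inr ⟨h, hs⟩
      refine ⟨fun s => if s ∈ ε' ∩ ν then B2 s else C1 s, ⟨B1', B2', ?_, ?_, hM, ?_⟩, ?_, ?_⟩
      · intro s hs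
        rw [h1 hs, ← hC (hνsub s hs)]
      · intro s hs
        by_cases hse : s ∈ ε' ∩ ν
        · simp only [hse, if_pos]
          exact h2 hs
        · simp only [hse, if_false]
          rw [h2 hs, hin hse, ← hC (hνsub s hs)]
      · intro s hs
        simp only [Set.mem_compl_iff] at hs
        simp [hs]
      · intro s hs
        by_cases hse : s ∈ ε' ∩ ν
        · simp [hse]
        · simp only [hse, if_false]
          rcases hs with hs | hs
          · rw [hC (Or.inl hs), ← hin hse]
          · exact absurd hs hse
      · intro s hs
        simp only [Set.mem_compl_iff] at hs
        simp [hs]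
  | comp hc hi M1 M2 ih1 ih2 =>
      rename_i σ1 ε1 σ2 ε2
      intro B1 B2 C1 h hC
      obtain ⟨B', hA, hB⟩ := h
      have hC1 : Set.EqOn C1 B1 (σ1 ∪ ε1) := by
        intro s hs
        apply hC
        rcases hs with hs | hs
        · exact Or.inl (Or.inl hs)
        · exact Or.inr (Or.inl hs)
      obtain ⟨C', hCA, hCeq, hCin⟩ := ih1 hA hC1
      have hC2 : Set.EqOn C' B' (σ2 ∪ ε2) := by
        intro s hs
        by_cases hse : s ∈ ε1
        · exact hCeq (Or.inr hse)
        · rw [hCin hse, M1.inertia hA hse]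
          apply hC
          rcases hs with hs | hs
          · by_cases hs1 : s ∈ σ1
            · exact Or.inl (Or.inl hs1)
            · exact Or.inl (Or.inr ⟨hs, hse⟩)
          · exact Or.inr (Or.inr hs)
      obtain ⟨C2, hCB, hCeq2, hCin2⟩ := ih2 hB hC2
      refine ⟨C2, ⟨C', hCA, hCB⟩, ?_, ?_⟩
      · intro s hs
        by_cases hse2 : s ∈ ε2
        · exact hCeq2 (Or.inr hse2)
        · rw [hCin2 hse2, M2.inertia hB hse2]
          by_cases hse1 : s ∈ ε1
          · exact hCeq (Or.inr hse1)
          · rw [hCin hse1, M1.inertia hA hse1]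
            exact hC hs
      · intro s hs
        simp only [Set.mem_compl_iff, Set.mem_union, not_or] at hs
        rw [hCin2 hs.2, hCin hs.1]
  | union h12 h21 M1 M2 ih1 ih2 =>
      rename_i σ1 ε1 σ2 ε2
      intro B1 B2 C1 h hC
      rcases h with h | h
      · have hC1 : Set.EqOn C1 B1 (σ1 ∪ ε1) := by
          intro s hs
          apply hC
          rcases hs with hs | hs
          · exact Or.inl (Or.inl hs)
          · exact Or.inr (Or.inl hs)
        obtain ⟨C2, hCt, hCeq, hCin⟩ := ih1 h hC1
        refine ⟨C2, Or.inl hCt, ?_, ?_⟩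
        · intro s hs
          by_cases hse : s ∈ ε1
          · exact hCeq (Or.inr hse)
          · rw [hCin hse, M1.inertia h hse]
            exact hC hs
        · intro s hs
          simp only [Set.mem_compl_iff, Set.mem_union, not_or] at hs
          exact hCin hs.1
      · have hC1 : Set.EqOn C1 B1 (σ2 ∪ ε2) := by
          intro s hs
          apply hC
          rcases hs with hs | hs
          · exact Or.inl (Or.inr hs)
          · exact Or.inr (Or.inr hs)
        obtain ⟨C2, hCt, hCeq, hCin⟩ := ih2 h hC1
        refine ⟨C2, Or.inr hCt, ?_, ?_⟩
        · intro s hs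
          by_cases hse : s ∈ ε2
          · exact hCeq (Or.inr hse)
          · rw [hCin hse, M2.inertia h hse]
            exact hC hs
        · intro s hs
          simp only [Set.mem_compl_iff, Set.mem_union, not_or] at hs
          exact hCin hs.2
  | feedback R S hR hS M ih =>
      rename_i σ' ε'
      intro B1 B2 C1 h hC
      have hC1 : Set.EqOn C1 B1 (σ' ∪ ε') := by
        intro s hs
        apply hC
        rcases hs with hs | hs
        · by_cases hsR : s = R
          · exact Or.inr (Or.inr hsR)
          · exact Or.inl ⟨hs, hsR⟩
        · exact Or.inr (Or.inl hs)
      obtain ⟨C2, hCt, hCeq, hCin⟩ := ih h.1 hC1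
      refine ⟨C2, ⟨hCt, ?_⟩, ?_, ?_⟩
      · rw [hC1 (Or.inl hR), h.2, hCeq (Or.inr hS)]
      · intro s hs
        rcases hs with hs | hs
        · exact hCeq (Or.inl hs.1)
        · rcases hs with hs | hs
          · exact hCeq (Or.inr hs)
          · by_cases hse : s ∈ ε'
            · exact hCeq (Or.inr hse)
            · rw [hCin hse, M.inertia h.1 hse, hC1 (Or.inl (hs ▸ hR))]
      · intro s hs
        simp only [Set.mem_compl_iff, Set.mem_union, not_or] at hs
        exact hCin hs.1

/-- Union step of the equivalence of semantics: if
`M1 ∈ MS(σ1, ε1)` and `M2 ∈ MS(σ2, ε2)` are well-formed modular systems with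
`σ1 ∩ ε2 = ∅` and `σ2 ∩ ε1 = ∅`, `M1^mt = M1^op` and `M2^mt = M2^op`, then the
union `M1 ∪ M2 ∈ MS(σ1 ∪ σ2, ε1 ∪ ε2)` satisfies `(M1 ∪ M2)^mt = (M1 ∪ M2)^op`. -/
theorem mt_eq_op_union {σ1 ε1 σ2 ε2 : Set Symb}
    (h12 : Disjoint σ1 ε2) (h21 : Disjoint σ2 ε1)
    (M1 : MS Symb Val σ1 ε1) (M2 : MS Symb Val σ2 ε2)
    (h1 : M1.mt = M1.op) (h2 : M2.mt = M2.op) :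
    (MS.union h12 h21 M1 M2).mt = (MS.union h12 h21 M1 M2).op := by
  ext B
  simp only [MS.mt]
  constructor
  · rintro (hB | hB)
    · rw [h1] at hB
      obtain ⟨B1, B2, ht, heq1, heq2⟩ := hB
      classical
      set C1 : Symb → Val := fun s => if s ∈ σ1 ∪ ε1 then B1 s else B s with hC1def
      have hC1 : Set.EqOn C1 B1 (σ1 ∪ ε1) := by
        intro s hs
        simp only [hC1def]
        rw [if_pos hs]
      obtain ⟨C2, hCt, hCeq, hCin⟩ := M1.localT ht hC1
      refine ⟨C1, C2, Or.inl hCt, ?_, ?_⟩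
      · intro s hs
        rcases hs with hs | hs
        · rw [hC1 (Or.inl hs)]; exact heq1 hs
        · by_cases hse : s ∈ σ1 ∪ ε1
          · rcases hse with hse | hse
            · rw [hC1 (Or.inl hse)]; exact heq1 hse
            · exact absurd hse (h21.le_bot ⟨hs, hse⟩ : False).elim
          · simp only [hC1def]
            rw [if_neg hse]
      · intro s hs
        rcases hs with hs | hs
        · rw [hCeq (Or.inr hs)]; exact heq2 hs
        · by_cases hse : s ∈ ε1
          · rw [hCeq (Or.inr hse)]; exact heq2 hse
          · rw [hCin hse]
            have hs1 : s ∉ σ1 := fun h => (h12.le_bot ⟨h, hs⟩ : (⊥ : Set Symb) s).elim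
            have : s ∉ σ1 ∪ ε1 := by
              rintro (h | h)
              · exact hs1 h
              · exact hse h
            simp only [hC1def]
            rw [if_neg this]
    · rw [h2] at hB
      obtain ⟨B1, B2, ht, heq1, heq2⟩ := hB
      classical
      set C1 : Symb → Val := fun s => if s ∈ σ2 ∪ ε2 then B1 s else B s with hC1def
      have hC1 : Set.EqOn C1 B1 (σ2 ∪ ε2) := by
        intro s hs
        simp only [hC1def]
        rw [if_pos hs]
      obtain ⟨C2, hCt, hCeq, hCin⟩ := M2.localT ht hC1
      refine ⟨C1, C2, Or.inr hCt, ?_, ?_⟩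
      · intro s hs
        rcases hs with hs | hs
        · by_cases hse : s ∈ σ2 ∪ ε2
          · rcases hse with hse | hse
            · rw [hC1 (Or.inl hse)]; exact heq1 hse
            · exact absurd hse (h12.le_bot ⟨hs, hse⟩ : False).elim
          · simp only [hC1def]
            rw [if_neg hse]
        · rw [hC1 (Or.inl hs)]; exact heq1 hs
      · intro s hs
        rcases hs with hs | hs
        · by_cases hse : s ∈ ε2
          · rw [hCeq (Or.inr hse)]; exact heq2 hse
          · rw [hCin hse]
            have hs2 : s ∉ σ2 := fun h => (h21.le_bot ⟨h, hs⟩ : (⊥ : Set Symb) s).elim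
            have : s ∉ σ2 ∪ ε2 := by
              rintro (h | h)
              · exact hs2 h
              · exact hse h
            simp only [hC1def]
            rw [if_neg this]
        · rw [hCeq (Or.inr hs)]; exact heq2 hs
  · rintro ⟨B1, B2, ht | ht, heq1, heq2⟩
    · left
      rw [h1]
      exact ⟨B1, B2, ht, fun s hs => heq1 (Or.inl hs), fun s hs => heq2 (Or.inl hs)⟩
    · right
      rw [h2]
      exact ⟨B1, B2, ht, fun s hs => heq1 (Or.inr hs), fun s hs => heq2 (Or.inr hs)⟩
end
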